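/- Let M and N be p.f.d. free ℝ^n-persistence modules with n ≥ 2. If M and N are δ-interleaved, then there is an (n−1)δ-matching between B(M) and B(N); hence d_B(M,N) ≤ (n−1)·d_I(M,N). -/

import Mathlib

open CategoryTheory Classical

noncomputable section

/-- Convexity of a subset of a poset. -/
def IsConvex {P : Type} [Preorder P] (I : Set P) : Prop :=
  ∀ ⦃p q r : P⦄, p ∈ I → q ∈ I → p ≤ r → r ≤ q → r ∈ I

/-- Zigzag connectivity within a subset. -/
def ZigzagConnected {P : Type} [Preorder P] (I : Set P) : Prop :=
  ∀ p ∈ I, ∀ q ∈ I,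
    Relation.ReflTransGen (fun a b => a ∈ I ∧ b ∈ I ∧ (a ≤ b ∨ b ≤ a)) p q

/-- An interval in a poset: nonempty, convex, and zigzag connected. -/
def IsIntervalSet {P : Type} [Preorder P] (I : Set P) : Prop :=
  I.Nonempty ∧ IsConvex I ∧ ZigzagConnected I

open scoped Classical in
/-- The pointwise vector space of the interval module: `k` (as `⊤`) on `I`, `0` off `I`. -/
def objSub (k : Type) [Field k] {P : Type} [Preorder P] (I : Set P) (p : P) : Submodule k k :=
  if p ∈ I then ⊤ else ⊥

open scoped Classical in
/-- The interval persistence module `𝕀^I` as a functor `P ⥤ ModuleCat k`. -/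
def intervalModule (k : Type) [Field k] {P : Type} [Preorder P] (I : Set P)
    (hI : IsConvex I) : P ⥤ ModuleCat.{0} k where
  obj p := ModuleCat.of k (objSub k I p)
  map {p q} h :=
    if hpq : p ∈ I ∧ q ∈ I then
      ModuleCat.ofHom
        { toFun := fun x => ⟨(x : k), by simp [objSub, hpq.2]⟩
          map_add' := by intros; rfl
          map_smul' := by intros; rfl }
    else 0
  map_id := by
    intro p
    try dsimp only
    by_cases hp : p ∈ I
    · rw [dif_pos ⟨hp, hp⟩]; rfl
    · rw [dif_neg (fun h => hp h.1)]
      haveI : Subsingleton ↥(objSub k I p) := by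
        rw [objSub, if_neg hp]; infer_instance
      apply ModuleCat.hom_ext; apply LinearMap.ext; intro x
      exact this.allEq _ _
  map_comp := by
    intro p q r hpq hqr
    try dsimp only
    by_cases hpr : p ∈ I ∧ r ∈ I
    · have hq : q ∈ I := hI hpr.1 hpr.2 (leOfHom hpq) (leOfHom hqr)
      rw [dif_pos hpr, dif_pos ⟨hpr.1, hq⟩, dif_pos ⟨hq, hpr.2⟩]
      rfl
    · rw [dif_neg hpr]
      by_cases hp : p ∈ I
      · have hr : r ∉ I := fun hr => hpr ⟨hp, hr⟩
        haveI : Subsingleton ↥(objSub k I r) := by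
          rw [objSub, if_neg hr]; infer_instance
        apply ModuleCat.hom_ext; apply LinearMap.ext; intro x
        exact this.allEq _ _
      · haveI : Subsingleton ↥(objSub k I p) := by
          rw [objSub, if_neg hp]; infer_instance
        apply ModuleCat.hom_ext; apply LinearMap.ext; intro x
        have hx : x = 0 := this.allEq x 0
        rw [hx]
        simp

open DirectSum

open scoped ENNReal

/-- Direct sum of a family of persistence modules. -/
def dsumF (k : Type) [Field k] {P : Type} [Preorder P] {ι : Type}
    (F : ι → P ⥤ ModuleCat.{0} k) : P ⥤ ModuleCat.{0} k where
  obj p := ModuleCat.of k (⨁ i, ((F i).obj p : Type))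
  map {p q} h := ModuleCat.ofHom
    (DFinsupp.mapRange.linearMap (fun i => ((F i).map h).hom))
  map_id := by
    intro p
    try dsimp only
    simp only [CategoryTheory.Functor.map_id, ModuleCat.hom_id]
    apply ModuleCat.hom_ext
    exact DFinsupp.mapRange.linearMap_id
  map_comp := by
    intro p q r hpq hqr
    try dsimp only
    simp only [CategoryTheory.Functor.map_comp]
    apply ModuleCat.hom_ext; apply LinearMap.ext; intro x
    apply DFinsupp.ext; intro i
    rfl

/-- Use the preorder category structure on `Fin n → ℝ`. -/
instance RnCat (n : ℕ) : Category (Fin n → ℝ) := Preorder.smallCategory _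

/-- Diagonal translation by `ε` as an endofunctor of the poset `Fin n → ℝ`. -/
def transl (n : ℕ) (ε : ℝ) : (Fin n → ℝ) ⥤ (Fin n → ℝ) :=
  Monotone.functor (f := fun p i => p i + ε)
    (fun _ _ hab i => by dsimp only; linarith [hab i])

/-- `M` and `N` are `ε`-interleaved `ℝⁿ`-persistence modules. -/
def Interleaved (k : Type) [Field k] {n : ℕ} (ε : ℝ)
    (M N : (Fin n → ℝ) ⥤ ModuleCat.{0} k) : Prop :=
  ∃ _hε : 0 ≤ ε, ∃ (f : M ⟶ transl n ε ⋙ N) (g : N ⟶ transl n ε ⋙ M),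
    (∀ p : Fin n → ℝ, f.app p ≫ g.app (fun i => p i + ε) =
      M.map (homOfLE (show p ≤ fun i => p i + ε + ε from
        fun i => by show p i ≤ p i + ε + ε; linarith))) ∧
    (∀ p : Fin n → ℝ, g.app p ≫ f.app (fun i => p i + ε) =
      N.map (homOfLE (show p ≤ fun i => p i + ε + ε from
        fun i => by show p i ≤ p i + ε + ε; linarith)))

/-- An interval `I ⊆ ℝⁿ` is `δ`-trivial: it contains no pair `p ≤ p + δ`. -/
def SetTrivial {n : ℕ} (δ : ℝ) (I : Set (Fin n → ℝ)) : Prop :=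
  ¬ ∃ p, p ∈ I ∧ (fun i => p i + δ) ∈ I

/-- Barcode data: an indexed family of nonempty convex intervals in `ℝⁿ`. -/
structure Barcode (n : ℕ) where
  ι : Type
  I : ι → Set (Fin n → ℝ)
  nonempty : ∀ i, (I i).Nonempty
  conv : ∀ i, IsConvex (I i)

/-- The interval decomposable module associated to barcode data. -/
def Barcode.module (k : Type) [Field k] {n : ℕ} (B : Barcode n) :
    (Fin n → ℝ) ⥤ ModuleCat.{0} k :=
  dsumF k fun i => intervalModule k (B.I i) (B.conv i)

/-- `B` is pointwise finite dimensional. -/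
def Barcode.pfd (k : Type) [Field k] {n : ℕ} (B : Barcode n) : Prop :=
  ∀ p : Fin n → ℝ, Module.Finite k ((B.module k).obj p)

/-- An `ε`-matching between two barcodes: a partial bijection such that unmatched
intervals are `2ε`-trivial and matched intervals are `ε`-interleaved. -/
def Matched (k : Type) [Field k] {n : ℕ} (ε : ℝ) (B C : Barcode n) : Prop :=
  0 ≤ ε ∧ ∃ (A : Set B.ι) (A' : Set C.ι) (e : A ≃ A'),
    (∀ i ∉ A, SetTrivial (2 * ε) (B.I i)) ∧
    (∀ j ∉ A', SetTrivial (2 * ε) (C.I j)) ∧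
    (∀ i : A, Interleaved k ε
      (intervalModule k (B.I i) (B.conv i))
      (intervalModule k (C.I (e i)) (C.conv (e i))))

/-- The interleaving distance, valued in `ℝ≥0∞`. -/
def dInt (k : Type) [Field k] {n : ℕ} (M N : (Fin n → ℝ) ⥤ ModuleCat.{0} k) : ℝ≥0∞ :=
  ⨅ (ε : ℝ) (_ : Interleaved k ε M N), ENNReal.ofReal ε

/-- The bottleneck distance between barcodes, valued in `ℝ≥0∞`. -/
def dBot (k : Type) [Field k] {n : ℕ} (B C : Barcode n) : ℝ≥0∞ :=
  ⨅ (ε : ℝ) (_ : Matched k ε B C), ENNReal.ofReal ε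

/-- Rectangles: products of real intervals. -/
def rectSet {n : ℕ} (R : Fin n → Set ℝ) : Set (Fin n → ℝ) := {x | ∀ i, x i ∈ R i}

theorem rectSet_convex {n : ℕ} (R : Fin n → Set ℝ) (h : ∀ i, (R i).OrdConnected) :
    IsConvex (rectSet R) := by
  intro p q r hp hq hpr hrq i
  exact (h i).out (hp i) (hq i) ⟨hpr i, hrq i⟩

/-- A barcode consists of rectangles. -/
def IsRectBarcode {n : ℕ} (B : Barcode n) : Prop :=
  ∀ i, ∃ R : Fin n → Set ℝ,
    (∀ j, (R j).Nonempty ∧ (R j).OrdConnected) ∧ B.I i = rectSet R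

/-- Free intervals `⟨p⟩ = {q | q ≥ p}` are convex. -/
theorem ici_convex {P : Type} [Preorder P] (p : P) : IsConvex (Set.Ici p) :=
  fun _ _ _ ha _ har _ => ha.trans har

/-- A barcode consists of free intervals. -/
def IsFreeBarcode {n : ℕ} (B : Barcode n) : Prop :=
  ∀ i, ∃ p : Fin n → ℝ, B.I i = Set.Ici p

/-!
A free module with barcode `{⟨aᵢ⟩}` is free on generators in degrees `aᵢ`, so a `δ`-interleaving
`(f, g)` with a free module with barcode `{⟨bⱼ⟩}` is encoded by matrices `F`, `G` with
`F j i ≠ 0 → bⱼ ≤ aᵢ + δ`, `G i j ≠ 0 → aᵢ ≤ bⱼ + δ` and `G F = 1` (`g ∘ f` is the shift by `2δ`,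
which fixes every generator). This forces Hall's condition for the relation
`‖aᵢ - bⱼ‖∞ ≤ (n - 1)δ`. Otherwise some finite `s` has fewer neighbours `W`, and some `v ≠ 0` on
`s` has `(F v)ⱼ = 0` for `j ∈ W`. Take `i₀` in the support of `v` with the largest coordinate sum
`∑ aᵢ₀`: every `j` contributing to `v i₀ = (G F v) i₀` satisfies `aᵢ₀ ≤ bⱼ + δ` and `bⱼ ≤ aᵢ + δ`
for some `i` in the support, and `∑ aᵢ ≤ ∑ aᵢ₀` then puts `bⱼ` within `(n - 1)δ` of `aᵢ₀` or of
`aᵢ`, so `j ∈ W` and `v i₀ = 0`. Hall's theorem in both directions and Schröder–Bernstein give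
the matching.
-/

theorem le_add_of_dist_le {ι : Type*} [Fintype ι] {x y : ι → ℝ} {ε : ℝ} (h : dist x y ≤ ε)
    (l : ι) : y l ≤ x l + ε := by
  have := (dist_le_pi_dist x y l).trans h
  rw [Real.dist_eq, abs_le] at this
  linarith

open Finset in
theorem sum_sub_le_card_sub_one_mul {ι : Type*} [Fintype ι] {u : ι → ℝ} {δ : ℝ}
    (hu : ∀ l, u l ≤ δ) (l₀ : ι) : ∑ l, u l - u l₀ ≤ ((Fintype.card ι : ℝ) - 1) * δ := by
  classical
  rw [← sum_erase_eq_sub (mem_univ l₀)]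
  calc ∑ l ∈ univ.erase l₀, u l ≤ #(univ.erase l₀) • δ := sum_le_card_nsmul _ _ _ fun l _ => hu l
    _ = _ := by rw [card_erase_of_mem (mem_univ l₀), nsmul_eq_mul, card_univ,
      Nat.cast_pred (Fintype.card_pos_iff.2 ⟨l₀⟩)]

theorem dist_le_or_dist_le_of_sum_le {ι : Type*} [Fintype ι] (hι : 2 ≤ Fintype.card ι)
    {δ : ℝ} (hδ : 0 ≤ δ) {x m z : ι → ℝ}
    (hxm : ∀ l, x l ≤ m l + δ) (hmz : ∀ l, m l ≤ z l + δ) (hzx : ∑ l, z l ≤ ∑ l, x l) :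
    dist m x ≤ ((Fintype.card ι : ℝ) - 1) * δ ∨ dist m z ≤ ((Fintype.card ι : ℝ) - 1) * δ := by
  set c := ((Fintype.card ι : ℝ) - 1) * δ
  have hδc : δ ≤ c :=
    le_mul_of_one_le_left hδ (by linarith [show (2 : ℝ) ≤ Fintype.card ι by exact_mod_cast hι])
  simp only [dist_pi_le_iff (hδ.trans hδc), Real.dist_eq, abs_le]
  by_cases hclose : ∀ l, m l - x l ≤ c
  · exact Or.inl fun l => ⟨by linarith [hxm l], hclose l⟩
  push Not at hclose
  obtain ⟨l₀, hl₀⟩ := hclose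
  have hsum_lt : ∑ l, x l < ∑ l, m l := by
    have := sum_sub_le_card_sub_one_mul (u := fun l => x l - m l) (δ := δ)
      (fun l => by linarith [hxm l]) l₀
    rw [Finset.sum_sub_distrib] at this
    linarith
  refine Or.inr fun l => ⟨?_, by linarith [hmz l]⟩
  have := sum_sub_le_card_sub_one_mul (u := fun l => m l - z l) (δ := δ)
    (fun l => by linarith [hmz l]) l
  rw [Finset.sum_sub_distrib] at this
  linarith

section Matching

variable {ι I J k : Type*} [Fintype ι] [Field k] {δ : ℝ} {a : I → ι → ℝ} {b : J → ι → ℝ}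
  {F : J → I → k} {G : I → J → k}

theorem card_le_card_biUnion_of_finsum_mul_eq_ite [DecidableEq I] (hι : 2 ≤ Fintype.card ι)
    (hδ : 0 ≤ δ) (hF : ∀ j i, F j i ≠ 0 → ∀ l, b j l ≤ a i l + δ)
    (hG : ∀ i j, G i j ≠ 0 → ∀ l, a i l ≤ b j l + δ)
    (hFfin : ∀ i, (Function.support (F · i)).Finite)
    (hGF : ∀ i i', ∑ᶠ j, G i' j * F j i = if i' = i then 1 else 0)
    {N : I → Finset J}
    (hN : ∀ i j, dist (a i) (b j) ≤ ((Fintype.card ι : ℝ) - 1) * δ → j ∈ N i)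
    (s : Finset I) : s.card ≤ (s.biUnion N).card := by
  by_contra! hlt
  set W := s.biUnion N
  set FW := Matrix.of fun (j : W) (i : s) => F j i
  obtain ⟨v, hvker, hv0⟩ : ∃ v : s → k, FW.mulVec v = 0 ∧ v ≠ 0 :=
    (Submodule.ne_bot_iff _).1 <|
      LinearMap.ker_ne_bot_of_finrank_lt (f := FW.mulVecLin) (by simpa using hlt)
  have hFv : ∀ j ∈ W, ∑ i : s, F j i * v i = 0 := fun j hj => congrFun hvker ⟨j, hj⟩
  obtain ⟨i₀, hi₀, hmax⟩ := Finset.exists_max_image {i | v i ≠ 0} (fun i : s => ∑ l, a i l)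
    (by simpa [Finset.filter_nonempty_iff, funext_iff] using hv0)
  have hterm : ∀ j, G i₀ j * ∑ i : s, F j i * v i = 0 := by
    intro j
    by_cases hj : j ∈ W
    · rw [hFv j hj, mul_zero]
    by_contra hne
    obtain ⟨hGj, hsum⟩ := mul_ne_zero_iff.1 hne
    obtain ⟨i, -, hi⟩ := Finset.exists_ne_zero_of_sum_ne_zero hsum
    obtain ⟨hFji, hvi⟩ := mul_ne_zero_iff.1 hi
    apply hj
    rcases dist_le_or_dist_le_of_sum_le hι hδ (hG i₀ j hGj) (hF j i hFji)
      (hmax i (by simpa using hvi)) with h | h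
    · exact Finset.mem_biUnion.2 ⟨i₀, i₀.2, hN _ _ (by rwa [dist_comm])⟩
    · exact Finset.mem_biUnion.2 ⟨i, i.2, hN _ _ (by rwa [dist_comm])⟩
  apply (Finset.mem_filter.1 hi₀).2
  calc v i₀ = ∑ i : s, (∑ᶠ j, G i₀ j * F j i) * v i := by simp [hGF]
    _ = ∑ᶠ j, G i₀ j * ∑ i : s, F j i * v i := by
      simp only [finsum_mul, Finset.mul_sum, mul_assoc]
      refine sum_finsum_comm _ _ fun i _ => (hFfin i).subset fun j hj => ?_
      exact fun h => hj (by simp [h])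
    _ = 0 := by simp only [hterm, finsum_zero]

theorem exists_injective_dist_le_of_finsum_mul_eq_ite [DecidableEq I]
    (hι : 2 ≤ Fintype.card ι) (hδ : 0 ≤ δ) (hF : ∀ j i, F j i ≠ 0 → ∀ l, b j l ≤ a i l + δ)
    (hG : ∀ i j, G i j ≠ 0 → ∀ l, a i l ≤ b j l + δ)
    (hFfin : ∀ i, (Function.support (F · i)).Finite)
    (hGF : ∀ i i', ∑ᶠ j, G i' j * F j i = if i' = i then 1 else 0)
    (hnear : ∀ i, {j | dist (a i) (b j) ≤ ((Fintype.card ι : ℝ) - 1) * δ}.Finite) :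
    ∃ φ : I → J, Function.Injective φ ∧
      ∀ i, dist (a i) (b (φ i)) ≤ ((Fintype.card ι : ℝ) - 1) * δ := by
  obtain ⟨φ, hφ, hφN⟩ := (Finset.all_card_le_biUnion_card_iff_exists_injective
    fun i => (hnear i).toFinset).1 <| card_le_card_biUnion_of_finsum_mul_eq_ite hι hδ hF hG
      hFfin hGF fun i _ h => (hnear i).mem_toFinset.2 h
  exact ⟨φ, hφ, fun i => (hnear i).mem_toFinset.1 (hφN i)⟩

end Matching

section IntervalModule

variable {k : Type} [Field k] {P : Type} [Preorder P] {I J : Set P}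

theorem objSub_le_objSub {p q : P} (h : p ∈ I → q ∈ J) : objSub k I p ≤ objSub k J q := by
  unfold objSub
  split_ifs with hp hq
  · exact le_rfl
  · exact absurd (h hp) hq
  · exact le_top
  · exact le_rfl

theorem objSub_coe_eq_zero {p : P} (x : objSub k I p) (hp : p ∉ I) : (x : k) = 0 := by
  have hx := x.2
  simp only [objSub, if_neg hp, Submodule.mem_bot] at hx
  exact hx

theorem intervalModule_map_coe (hI : IsConvex I) {p q : P} (η : p ⟶ q) (x : objSub k I p) :
    (objSub k I q).subtype ((intervalModule k I hI).map η x) = if q ∈ I then (x : k) else 0 := by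
  by_cases hpq : p ∈ I ∧ q ∈ I
  · rw [if_pos hpq.2]
    simp only [intervalModule, dif_pos hpq]
    rfl
  · simp only [intervalModule, dif_neg hpq]
    split_ifs with hq
    · rw [objSub_coe_eq_zero x fun hp => hpq ⟨hp, hq⟩]
      rfl
    · rfl

theorem intervalModule_map_coe_of_isUpperSet (hIc : IsConvex I) (hI : IsUpperSet I) {p q : P}
    (η : p ⟶ q) (x : objSub k I p) :
    (objSub k I q).subtype ((intervalModule k I hIc).map η x) = x := by
  rw [intervalModule_map_coe]
  split_ifs with hq
  · rfl
  · exact (objSub_coe_eq_zero x fun hp => hq (hI (leOfHom η) hp)).symm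

end IntervalModule

section UpperSet

variable {k : Type} [Field k] {n : ℕ} {I J : Set (Fin n → ℝ)}

def upperSetShiftHom (hIc : IsConvex I) (hJc : IsConvex J) (hI : IsUpperSet I)
    (hJ : IsUpperSet J) {ε : ℝ} (hIJ : ∀ p ∈ I, (fun l => p l + ε) ∈ J) :
    intervalModule k I hIc ⟶ transl n ε ⋙ intervalModule k J hJc where
  app p := ModuleCat.ofHom (Submodule.inclusion (objSub_le_objSub (hIJ p)))
  naturality p q η := by
    ext x
    apply Subtype.ext
    exact (intervalModule_map_coe_of_isUpperSet hIc hI η x).trans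
      (intervalModule_map_coe_of_isUpperSet hJc hJ ((transl n ε).map η)
        (Submodule.inclusion (objSub_le_objSub (hIJ p)) x)).symm

theorem interleaved_of_isUpperSet (hIc : IsConvex I) (hJc : IsConvex J) (hI : IsUpperSet I)
    (hJ : IsUpperSet J) {ε : ℝ} (hε : 0 ≤ ε) (hIJ : ∀ p ∈ I, (fun l => p l + ε) ∈ J)
    (hJI : ∀ p ∈ J, (fun l => p l + ε) ∈ I) :
    Interleaved k ε (intervalModule k I hIc) (intervalModule k J hJc) := by
  refine ⟨hε, upperSetShiftHom hIc hJc hI hJ hIJ, upperSetShiftHom hJc hIc hJ hI hJI,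
    fun p => ?_, fun p => ?_⟩
  · ext x
    exact Subtype.ext (intervalModule_map_coe_of_isUpperSet hIc hI _ x).symm
  · ext x
    exact Subtype.ext (intervalModule_map_coe_of_isUpperSet hJc hJ _ x).symm

theorem interleaved_of_eq_Ici (hIc : IsConvex I) (hJc : IsConvex J) {a b : Fin n → ℝ}
    (hI : I = Set.Ici a) (hJ : J = Set.Ici b) {ε : ℝ} (hab : dist a b ≤ ε) :
    Interleaved k ε (intervalModule k I hIc) (intervalModule k J hJc) := by
  subst hI hJ
  have shift {x y : Fin n → ℝ} (h : dist x y ≤ ε) (p : Fin n → ℝ) (hp : p ∈ Set.Ici x) :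
      (fun l => p l + ε) ∈ Set.Ici y := fun l =>
    (le_add_of_dist_le h l).trans (by dsimp only; linarith [hp l])
  exact interleaved_of_isUpperSet hIc hJc (isUpperSet_Ici a) (isUpperSet_Ici b)
    (dist_nonneg.trans hab) (shift hab) (shift (dist_comm a b ▸ hab))

end UpperSet

theorem Interleaved.symm {k : Type} [Field k] {n : ℕ} {ε : ℝ}
    {M N : (Fin n → ℝ) ⥤ ModuleCat.{0} k} (h : Interleaved k ε M N) : Interleaved k ε N M :=
  let ⟨hε, f, g, hfg, hgf⟩ := h
  ⟨hε, g, f, hgf, hfg⟩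

theorem le_add_add_of_nonneg {n : ℕ} {δ : ℝ} (hδ : 0 ≤ δ) (p : Fin n → ℝ) :
    p ≤ fun l => p l + δ + δ :=
  fun l => by dsimp only; linarith

namespace Barcode

open DirectSum

variable {k : Type} [Field k] {n : ℕ} {B : Barcode n} {p q : Fin n → ℝ} {i : B.ι}

variable (B) in
def coord (p : Fin n → ℝ) (i : B.ι) : (⨁ i, objSub k (B.I i) p) →ₗ[k] k :=
  (objSub k (B.I i) p).subtype ∘ₗ component k B.ι _ i

variable (k B) in
def gen (i : B.ι) (p : Fin n → ℝ) : ⨁ i, objSub k (B.I i) p :=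
  if h : p ∈ B.I i then lof k B.ι _ i ⟨1, by simp [objSub, h]⟩ else 0

theorem coord_apply (x : ⨁ i, objSub k (B.I i) p) (i : B.ι) : B.coord p i x = x i :=
  rfl

theorem coord_eq_zero_of_notMem (x : ⨁ i, objSub k (B.I i) p) (h : p ∉ B.I i) :
    B.coord p i x = 0 :=
  objSub_coe_eq_zero (x i) h

theorem mem_of_coord_ne_zero {x : ⨁ i, objSub k (B.I i) p} (h : B.coord p i x ≠ 0) :
    p ∈ B.I i :=
  not_imp_comm.1 (coord_eq_zero_of_notMem x) h

theorem ext_coord {x y : ⨁ i, objSub k (B.I i) p} (h : ∀ i, B.coord p i x = B.coord p i y) :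
    x = y :=
  DFinsupp.ext fun i => Subtype.ext (h i)

theorem coord_map (η : p ⟶ q) (x : ⨁ i, objSub k (B.I i) p) (i : B.ι) :
    B.coord q i ((B.module k).map η x) = if q ∈ B.I i then B.coord p i x else 0 :=
  intervalModule_map_coe (B.conv i) η (x i)

theorem coord_gen (h : p ∈ B.I i) (i' : B.ι) :
    B.coord p i' (B.gen k i p) = if i' = i then 1 else 0 := by
  rw [gen, dif_pos h]
  split_ifs with hi
  · subst hi
    simp [coord]
  · simp [coord, component.of, Ne.symm hi]

theorem map_gen (η : p ⟶ q) (hp : p ∈ B.I i) (hq : q ∈ B.I i) :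
    (B.module k).map η (B.gen k i p) = B.gen k i q :=
  ext_coord fun i' => by
    rw [coord_map, coord_gen hp, coord_gen hq]
    by_cases hi : i' = i
    · subst hi
      rw [if_pos hq]
    · simp only [hi, if_false, ite_self]

theorem coord_smul_gen (x : ⨁ i, objSub k (B.I i) p) (i : B.ι) :
    B.coord p i x • B.gen k i p = of _ i (x i) := by
  unfold gen
  split_ifs with h
  · rw [lof_eq_of, ← of_smul]
    congr 1
    ext
    simp [coord_apply]
  · rw [smul_zero, show x i = 0 from Subtype.ext (objSub_coe_eq_zero (x i) h), map_zero]

theorem apply_eq_finsum {V : Type*} [AddCommGroup V] [Module k V]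
    (L : (⨁ i, objSub k (B.I i) p) →ₗ[k] V) (x : ⨁ i, objSub k (B.I i) p) :
    L x = ∑ᶠ i, B.coord p i x • L (B.gen k i p) := by
  rw [finsum_eq_sum_of_support_subset _ (s := x.support) fun i hi => ?_]
  · conv_lhs => rw [← sum_support_of x]
    simp only [map_sum, ← coord_smul_gen, map_smul]
  · refine DFinsupp.mem_support_iff.2 fun hx => hi ?_
    simp [coord_apply, hx]

theorem finite_setOf_mem (hB : B.pfd k) (p : Fin n → ℝ) : {i | p ∈ B.I i}.Finite := by
  have : Module.Finite k (⨁ i, objSub k (B.I i) p) := hB p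
  let S := {i | p ∈ B.I i}
  have hli : LinearIndependent k fun i : S => B.gen k i p :=
    LinearIndependent.of_comp (LinearMap.pi fun i : S => B.coord p i) <| by
      convert Pi.linearIndependent_single_one S k with i
      · ext i'
        simp [coord_gen i.2, Pi.single_apply, Subtype.ext_iff]
      · rfl
  exact Set.finite_coe_iff.1 hli.finite

end Barcode

section MatrixEntry

open Barcode

variable {k : Type} [Field k] {n : ℕ} {B C : Barcode n} {δ : ℝ}

def matrixEntry (f : B.module k ⟶ transl n δ ⋙ C.module k) (a : B.ι → Fin n → ℝ) (j : C.ι)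
    (i : B.ι) : k :=
  C.coord (fun l => a i l + δ) j (f.app (a i) (B.gen k i (a i)))

theorem mem_of_matrixEntry_ne_zero {f : B.module k ⟶ transl n δ ⋙ C.module k}
    {a : B.ι → Fin n → ℝ} {j : C.ι} {i : B.ι} (h : matrixEntry f a j i ≠ 0) :
    (fun l => a i l + δ) ∈ C.I j :=
  mem_of_coord_ne_zero h

theorem coord_app_gen (f : B.module k ⟶ transl n δ ⋙ C.module k) {a : B.ι → Fin n → ℝ}
    {i : B.ι} (hai : B.I i = Set.Ici (a i)) {p : Fin n → ℝ} (hp : a i ≤ p) {j : C.ι}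
    (hCj : IsUpperSet (C.I j)) :
    C.coord (fun l => p l + δ) j (f.app p (B.gen k i p)) = matrixEntry f a j i := by
  have hnat := NatTrans.naturality_apply f (homOfLE hp) (B.gen k i (a i))
  rw [map_gen (homOfLE hp) (hai ▸ Set.self_mem_Ici) (hai ▸ hp)] at hnat
  rw [hnat]
  refine (coord_map _ _ j).trans ?_
  split_ifs with hpj
  · rfl
  · by_contra hne
    refine hpj (hCj (fun l => ?_) (mem_of_matrixEntry_ne_zero (Ne.symm hne)))
    dsimp only
    linarith [hp l]

theorem finsum_matrixEntry_mul_matrixEntry (hδ : 0 ≤ δ)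
    (f : B.module k ⟶ transl n δ ⋙ C.module k) (g : C.module k ⟶ transl n δ ⋙ B.module k)
    (hfg : ∀ p, f.app p ≫ g.app (fun l => p l + δ) =
      (B.module k).map (homOfLE (le_add_add_of_nonneg hδ p)))
    {a : B.ι → Fin n → ℝ} (ha : ∀ i, B.I i = Set.Ici (a i))
    {b : C.ι → Fin n → ℝ} (hb : ∀ j, C.I j = Set.Ici (b j)) (i i' : B.ι) :
    ∑ᶠ j, matrixEntry g b i' j * matrixEntry f a j i = if i' = i then 1 else 0 := by
  set P : Fin n → ℝ := fun l => a i l + δ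
  set y := f.app (a i) (B.gen k i (a i))
  let L := B.coord (fun l => P l + δ) i' ∘ₗ (g.app P).hom
  calc ∑ᶠ j, matrixEntry g b i' j * matrixEntry f a j i
      = ∑ᶠ j, C.coord P j y • L (C.gen k j P) := finsum_congr fun j => by
        change _ * C.coord P j y = _
        rw [smul_eq_mul, mul_comm]
        by_cases hy : C.coord P j y = 0
        · rw [hy, zero_mul, zero_mul]
        have hP : P ∈ C.I j := mem_of_coord_ne_zero hy
        rw [hb j] at hP
        exact congrArg _ (coord_app_gen g (hb j) hP (ha i' ▸ isUpperSet_Ici _)).symm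
    _ = L y := (apply_eq_finsum L y).symm
    _ = B.coord _ i' ((B.module k).map (homOfLE (le_add_add_of_nonneg hδ (a i)))
          (B.gen k i (a i))) := by rw [← hfg]; rfl
    _ = if i' = i then 1 else 0 := by
      rw [map_gen _ (ha i ▸ Set.self_mem_Ici) (ha i ▸ le_add_add_of_nonneg hδ (a i)), coord_gen]
      exact ha i ▸ le_add_add_of_nonneg hδ (a i)

end MatrixEntry

section FreeBarcode

open Barcode

variable {k : Type} [Field k] {n : ℕ} {B C : Barcode n}

theorem exists_injective_dist_le_of_interleaved (hn : 2 ≤ n) {δ : ℝ} {a : B.ι → Fin n → ℝ}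
    {b : C.ι → Fin n → ℝ} (ha : ∀ i, B.I i = Set.Ici (a i)) (hb : ∀ j, C.I j = Set.Ici (b j))
    (hC : C.pfd k) (hI : Interleaved k δ (B.module k) (C.module k)) :
    ∃ φ : B.ι → C.ι, Function.Injective φ ∧ ∀ i, dist (a i) (b (φ i)) ≤ ((n : ℝ) - 1) * δ := by
  obtain ⟨hδ, f, g, hfg, -⟩ := hI
  have := exists_injective_dist_le_of_finsum_mul_eq_ite (by simpa using hn) hδ
    (F := matrixEntry f a) (G := matrixEntry g b)
    (fun j i h => (hb j ▸ mem_of_matrixEntry_ne_zero h : _ ∈ Set.Ici (b j)))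
    (fun i j h => (ha i ▸ mem_of_matrixEntry_ne_zero h : _ ∈ Set.Ici (a i)))
    (fun i => (finite_setOf_mem hC _).subset fun j hj => mem_of_matrixEntry_ne_zero hj)
    (finsum_matrixEntry_mul_matrixEntry hδ f g hfg ha hb)
    (fun i => (finite_setOf_mem hC fun l => a i l + ((n : ℝ) - 1) * δ).subset fun j hj => by
      rw [Set.mem_ofPred_eq, Fintype.card_fin] at hj
      rw [Set.mem_ofPred_eq, hb j]
      exact fun l => le_add_of_dist_le hj l)
  simpa using this

theorem matched_of_interleaved (hn : 2 ≤ n) {δ : ℝ} (hB : IsFreeBarcode B)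
    (hC : IsFreeBarcode C) (hBpfd : B.pfd k) (hCpfd : C.pfd k)
    (hI : Interleaved k δ (B.module k) (C.module k)) :
    Matched k (((n : ℝ) - 1) * δ) B C := by
  choose a ha using hB
  choose b hb using hC
  obtain ⟨φ, hφ, hφd⟩ := exists_injective_dist_le_of_interleaved hn ha hb hCpfd hI
  obtain ⟨ψ, hψ, hψd⟩ := exists_injective_dist_le_of_interleaved hn hb ha hBpfd hI.symm
  obtain ⟨e, he, hed⟩ := Function.Embedding.schroeder_bernstein_of_rel hφ hψ
    (fun i j => dist (a i) (b j) ≤ ((n : ℝ) - 1) * δ) hφd fun j => dist_comm (a _) (b j) ▸ hψd j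
  have hn' : (0 : ℝ) ≤ n - 1 := by linarith [show (2 : ℝ) ≤ n by exact_mod_cast hn]
  refine ⟨mul_nonneg hn' hI.1, Set.univ, Set.univ,
    (Equiv.Set.univ _).trans ((Equiv.ofBijective e he).trans (Equiv.Set.univ _).symm),
    fun i hi => (hi trivial).elim, fun j hj => (hj trivial).elim,
    fun i => interleaved_of_eq_Ici _ _ (ha i) (hb _) (hed i)⟩

end FreeBarcode

theorem dBot_le_mul_dInt {k : Type} [Field k] {n : ℕ} {B C : Barcode n} {c : ℝ} (hc : 0 < c)
    (h : ∀ ε, Interleaved k ε (B.module k) (C.module k) → Matched k (c * ε) B C) :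
    dBot k B C ≤ ENNReal.ofReal c * dInt k (B.module k) (C.module k) := by
  have hc0 : ENNReal.ofReal c ≠ 0 := by simpa using hc
  simp only [dInt, ENNReal.mul_iInf_of_ne hc0 ENNReal.ofReal_ne_top]
  refine le_iInf₂ fun ε hε => ?_
  rw [← ENNReal.ofReal_mul hc.le]
  exact iInf₂_le (f := fun ε (_ : Matched k ε B C) => ENNReal.ofReal ε) _ (h ε hε)

/-- **Theorem 3.10.** If `M` and `N` are p.f.d. free `ℝⁿ`-persistence
modules (`n ≥ 2`) that are `δ`-interleaved, then there is an `(n−1)δ`-matching between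
their barcodes; hence `d_B(M,N) ≤ (n−1)·d_I(M,N)`. -/
theorem free_stability
    (k : Type) [Field k] {n : ℕ} (hn : 2 ≤ n) (δ : ℝ)
    (B C : Barcode n) (hB : IsFreeBarcode B) (hC : IsFreeBarcode C)
    (hBpfd : B.pfd k) (hCpfd : C.pfd k)
    (hI : Interleaved k δ (B.module k) (C.module k)) :
    Matched k (((n : ℝ) - 1) * δ) B C ∧
      dBot k B C ≤ ((n : ℝ≥0∞) - 1) * dInt k (B.module k) (C.module k) := by
  refine ⟨matched_of_interleaved hn hB hC hBpfd hCpfd hI, ?_⟩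
  have hn' : (0 : ℝ) < n - 1 := by linarith [show (2 : ℝ) ≤ n by exact_mod_cast hn]
  have hcast : ((n : ℝ≥0∞) - 1) = ENNReal.ofReal ((n : ℝ) - 1) := by
    rw [ENNReal.ofReal_sub _ zero_le_one, ENNReal.ofReal_natCast, ENNReal.ofReal_one]
  rw [hcast]
  exact dBot_le_mul_dInt hn' fun ε hε => matched_of_interleaved hn hB hC hBpfd hCpfd hε
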